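/- Let k ≥ 0 be an integer and let h ∈ D¹ with v_D(h − 1) ≥ 4k + 2 (D¹ acts on W = D by right multiplication). Then for every v ∈ Γ = O_E² and every w ∈ p^{−k}·(O_E + P_E^{−1}·δ): (i) χ(Tr_{E/F}(⟨v, v⟩ · conj(⟨w, w·c(h)⟩'))) = 1, where c(h) = (1 − h)(1 + h)^{−1} is the Cayley transform in D; and (ii) v ⊗ (w·c(h)) ∈ A. -/

import Mathlib

noncomputable section
open Matrix

/-- The image of `p` in `E`. -/
def pE (p : ℕ) [Fact p.Prime] (E : Type) [Field E] [Algebra ℚ_[p] E] : E :=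
  algebraMap ℚ_[p] E (p : ℚ_[p])

/-- The ring of integers `O_E = ℤ_p + ℤ_p·α` of the unramified quadratic extension
`E = F(α)`, as a set. -/
def OE (p : ℕ) [Fact p.Prime] (E : Type) [Field E] [Algebra ℚ_[p] E] (α : E) : Set E :=
  {x | ∃ a b : ℤ_[p],
    x = algebraMap ℚ_[p] E (a : ℚ_[p]) + algebraMap ℚ_[p] E (b : ℚ_[p]) * α}

/-- The element `x_{a,b} = !![a, b; p·conj b, conj a]` of the quaternion division algebra
`D ⊆ M₂(E)`. -/
def qmat (p : ℕ) [Fact p.Prime] (E : Type) [Field E] [Algebra ℚ_[p] E]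
    (conj : E → E) (a b : E) : Matrix (Fin 2) (Fin 2) E :=
  !![a, b; pE p E * conj b, conj a]

/-- The uniformizer `δ = x_{0,1}` of `D`, with `δ² = p`. -/
def deltaM (p : ℕ) [Fact p.Prime] (E : Type) [Field E] [Algebra ℚ_[p] E] :
    Matrix (Fin 2) (Fin 2) E :=
  !![0, 1; pE p E, 0]

/-- The maximal order `O_D = {x_{a,b} : a, b ∈ O_E}` of `D`, as a set. -/
def ODset (p : ℕ) [Fact p.Prime] (E : Type) [Field E] [Algebra ℚ_[p] E]
    (α : E) (conj : E → E) : Set (Matrix (Fin 2) (Fin 2) E) :=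
  {m | ∃ a b : E, a ∈ OE p E α ∧ b ∈ OE p E α ∧ m = qmat p E conj a b}

/-- The norm-one group `D¹ = {x ∈ D : det x = 1}`, as a set. -/
def D1set (p : ℕ) [Fact p.Prime] (E : Type) [Field E] [Algebra ℚ_[p] E]
    (conj : E → E) : Set (Matrix (Fin 2) (Fin 2) E) :=
  {m | (∃ a b : E, m = qmat p E conj a b) ∧ m.det = 1}

/-- `vDge p E α conj r m` says `v_D(m) ≥ r`, i.e. `m ∈ δ^r·O_D = P_D^r`. -/
def vDge (p : ℕ) [Fact p.Prime] (E : Type) [Field E] [Algebra ℚ_[p] E]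
    (α : E) (conj : E → E) (r : ℕ) (m : Matrix (Fin 2) (Fin 2) E) : Prop :=
  ∃ yy ∈ ODset p E α conj, m = deltaM p E ^ r * yy

/-- `x ∈ P_E = p·O_E`. -/
def inPE (p : ℕ) [Fact p.Prime] (E : Type) [Field E] [Algebra ℚ_[p] E]
    (α : E) (x : E) : Prop :=
  ∃ c ∈ OE p E α, x = pE p E * c

/-- The pure tensor `v ⊗ w ∈ 𝒲 = V ⊗_E W` in coordinates: `(v ⊗ w) i j = v i · conj (w j)`
(the `E`-structure on `W`-coordinates is twisted by conjugation, so that the symplectic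
form below is well defined on `𝒲`).  Here `w = (c, d)` stands for `c + d·δ ∈ W = D`. -/
def tens (E : Type) [Field E] (conj : E → E) (v w : Fin 2 → E) :
    Matrix (Fin 2) (Fin 2) E :=
  Matrix.of fun i j => v i * conj (w j)

/-- The symplectic form `⟨⟨x, y⟩⟩ = Tr_{E/F}(⟨v,v'⟩·conj(⟨w,w'⟩'))` of `𝒲`, written in the
coordinates above, with values `t + conj t` landing in (the image of) `F`. -/
def sympE (p : ℕ) [Fact p.Prime] (E : Type) [Field E] [Algebra ℚ_[p] E]
    (conj : E → E) (x y : Matrix (Fin 2) (Fin 2) E) : E :=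
  (x 0 0 * conj (y 1 0) - pE p E * (x 0 1 * conj (y 1 1))
      - x 1 0 * conj (y 0 0) + pE p E * (x 1 1 * conj (y 0 1)))
    + conj (x 0 0 * conj (y 1 0) - pE p E * (x 0 1 * conj (y 1 1))
      - x 1 0 * conj (y 0 0) + pE p E * (x 1 1 * conj (y 0 1)))

/-- The lattice `A = Γ ⊗ Γ'`: the `O_E`-span (= additive span) of the pure tensors
`v ⊗ w` with `v ∈ Γ = O_E²` and `w ∈ Γ' = O_E + O_E·δ`. -/
def Alat (p : ℕ) [Fact p.Prime] (E : Type) [Field E] [Algebra ℚ_[p] E]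
    (α : E) (conj : E → E) : AddSubgroup (Matrix (Fin 2) (Fin 2) E) :=
  AddSubgroup.closure
    {m | ∃ v w : Fin 2 → E, (∀ i, v i ∈ OE p E α) ∧ (∀ j, w j ∈ OE p E α) ∧
      m = tens E conj v w}

/-- `x` lies in (the image in `E` of) `ℤ_p`. -/
def integralF (p : ℕ) [Fact p.Prime] (E : Type) [Field E] [Algebra ℚ_[p] E]
    (x : E) : Prop :=
  ∃ s : ℤ_[p], x = algebraMap ℚ_[p] E ((s : ℚ_[p]))

/-- The dual lattice `L* = {z ∈ 𝒲 : ⟨⟨z, l⟩⟩ ∈ ℤ_p for all l ∈ L}`. -/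
def dualLat (p : ℕ) [Fact p.Prime] (E : Type) [Field E] [Algebra ℚ_[p] E]
    (α : E) (conj : E → E) (L : Set (Matrix (Fin 2) (Fin 2) E)) :
    Set (Matrix (Fin 2) (Fin 2) E) :=
  {zz | ∀ l ∈ L, integralF p E (sympE p E conj zz l)}

/-- The entrywise embedding `M₂(ℤ_p) → M₂(E)`. -/
def toE (p : ℕ) [Fact p.Prime] (E : Type) [Field E] [Algebra ℚ_[p] E]
    (m : Matrix (Fin 2) (Fin 2) ℤ_[p]) : Matrix (Fin 2) (Fin 2) E :=
  m.map fun t => algebraMap ℚ_[p] E (t : ℚ_[p])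

/-- The Cayley transform `c(m) = (1 - m)(1 + m)⁻¹`. -/
def cay {E : Type} [Field E] (m : Matrix (Fin 2) (Fin 2) E) : Matrix (Fin 2) (Fin 2) E :=
  (1 - m) * (1 + m)⁻¹

/-- The skew-Hermitian form `⟨x, y⟩ = x₁·conj y₂ - x₂·conj y₁` on `V = E²`. -/
def sesqV (E : Type) [Field E] (conj : E → E) (x y : Fin 2 → E) : E :=
  x 0 * conj (y 1) - x 1 * conj (y 0)

/-- `Tr_{E/F}(x) = x + conj x`, as an element of `E`. -/
def trEl (E : Type) [Field E] (conj : E → E) (x : E) : E := x + conj x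

/-!
Since `v_D(h - 1) ≥ 2(2k + 1)`, we have `h = 1 + p^{2k+1}·y` with `y ∈ O_D`. For `h ∈ D¹` a
`2 × 2` computation gives `det(1 + h) = tr(1 + h) = 4 + p^{2k+1}·Tr_{E/F}(y₀₀) ∈ 4 + pℤ_p`, a unit
of `ℤ_p` because `p` is odd. Hence `(1 + h)⁻¹ = det(1 + h)⁻¹·adj(1 + h) ∈ O_D` and
`c(h) = -p^{2k+1}·y·(1 + h)⁻¹ ∈ p^{2k+1}·O_D`. Right multiplication by `p^{2k+1}·O_D` maps
`p^{-k}(O_E + P_E⁻¹δ)` into `p^k(P_E + O_E·δ) ⊆ Γ'`, which gives (ii), and makes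
`⟨w, w·c(h)⟩' ∈ O_E`; the trace of an element of `O_E` lies in `ℤ_p`, where `χ` is trivial,
which gives (i).
-/

section

variable {p : ℕ} [Fact p.Prime] {E : Type} [Field E] [Algebra ℚ_[p] E] {α : E}

section Integers

def OESubring {z : ℤ_[p]ˣ} (hα : α * α = algebraMap ℚ_[p] E ((z : ℤ_[p]) : ℚ_[p])) :
    Subring E where
  carrier := OE p E α
  mul_mem' := by
    rintro _ _ ⟨a, b, rfl⟩ ⟨a', b', rfl⟩
    refine ⟨a * a' + b * b' * z, a * b' + b * a', ?_⟩
    simp only [PadicInt.coe_add, PadicInt.coe_mul, map_add, map_mul]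
    linear_combination (algebraMap ℚ_[p] E b * algebraMap ℚ_[p] E b') * hα
  one_mem' := ⟨1, 0, by simp⟩
  add_mem' := by
    rintro _ _ ⟨a, b, rfl⟩ ⟨a', b', rfl⟩
    exact ⟨a + a', b + b', by push_cast [map_add]; ring⟩
  zero_mem' := ⟨0, 0, by simp⟩
  neg_mem' := by
    rintro _ ⟨a, b, rfl⟩
    exact ⟨-a, -b, by push_cast [map_neg]; ring⟩

lemma algebraMap_mem_OE (s : ℤ_[p]) : algebraMap ℚ_[p] E s ∈ OE p E α :=
  ⟨s, 0, by simp⟩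

lemma pE_mem_OE : pE p E ∈ OE p E α := by
  simpa [pE] using algebraMap_mem_OE (E := E) (α := α) (p : ℤ_[p])

lemma algebraMap_inv_mem_OE {t : ℤ_[p]} (ht : IsUnit t) :
    algebraMap ℚ_[p] E (t : ℚ_[p])⁻¹ ∈ OE p E α := by
  obtain ⟨u, rfl⟩ := ht
  convert algebraMap_mem_OE (E := E) (α := α) ((u⁻¹ : ℤ_[p]ˣ) : ℤ_[p]) using 2
  refine inv_eq_of_mul_eq_one_right ?_
  rw [← PadicInt.coe_mul, Units.mul_inv, PadicInt.coe_one]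

variable (conj : E →ₐ[ℚ_[p]] E) (hconj : conj α = -α)
include hconj

lemma conj_mem_OE {x : E} (hx : x ∈ OE p E α) : conj x ∈ OE p E α := by
  obtain ⟨a, b, rfl⟩ := hx
  exact ⟨a, -b, by simp [hconj]⟩

lemma integralF_trEl {x : E} (hx : x ∈ OE p E α) : integralF p E (trEl E conj x) := by
  obtain ⟨a, b, rfl⟩ := hx
  exact ⟨a + a, by
    simp only [trEl, map_add, map_mul, AlgHom.commutes, hconj, PadicInt.coe_add]; ring⟩

lemma conj_involutive
    (hspan : ∀ x : E, ∃ a b : ℚ_[p], x = algebraMap ℚ_[p] E a + algebraMap ℚ_[p] E b * α) :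
    Function.Involutive conj := by
  intro x
  obtain ⟨a, b, rfl⟩ := hspan x
  simp [hconj]

lemma psi_trEl_eq_one {M : Type*} [Monoid M] {TrF : E → ℚ_[p]}
    (hTrF : ∀ t : ℚ_[p], TrF (algebraMap ℚ_[p] E t) = t) {ψ : AddChar ℚ_[p] M}
    (hψ : ∀ t : ℤ_[p], ψ ((p : ℚ_[p]) * (t : ℚ_[p])) = 1) {x : E} (hx : x ∈ OE p E α) :
    ψ ((p : ℚ_[p]) * TrF (trEl E conj x)) = 1 := by
  obtain ⟨s, hs⟩ := integralF_trEl conj hconj hx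
  rw [hs, hTrF, hψ]

lemma sesqV_mem_OE {z : ℤ_[p]ˣ} (hα : α * α = algebraMap ℚ_[p] E ((z : ℤ_[p]) : ℚ_[p]))
    {v w : Fin 2 → E} (hv : ∀ i, v i ∈ OE p E α) (hw : ∀ i, w i ∈ OE p E α) :
    sesqV E conj v w ∈ OE p E α :=
  (OESubring hα).sub_mem ((OESubring hα).mul_mem (hv 0) (conj_mem_OE conj hconj (hw 1)))
    ((OESubring hα).mul_mem (hv 1) (conj_mem_OE conj hconj (hw 0)))

end Integers

lemma pE_ne_zero : pE p E ≠ 0 :=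
  (map_ne_zero _).mpr (Nat.cast_ne_zero.mpr (Fact.out : p.Prime).ne_zero)

section Quaternion

variable (conj : E →ₐ[ℚ_[p]] E)

lemma conj_pE : conj (pE p E) = pE p E := AlgHom.commutes _ _

lemma pE_pow_pairing (k : ℕ) (c d e₁ e₂ : E) :
    (pE p E)⁻¹ ^ k * c * conj (pE p E ^ (k + 1) * e₁)
        - pE p E * ((pE p E)⁻¹ ^ (k + 1) * d * conj (pE p E ^ k * e₂))
      = pE p E * (c * conj e₁) - d * conj e₂ := by
  have := pE_ne_zero (p := p) (E := E)
  simp only [map_mul, map_pow, conj_pE, inv_pow]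
  field_simp
  ring

@[simp] lemma qmat_apply_zero_zero (A B : E) : qmat p E conj A B 0 0 = A := rfl

@[simp] lemma qmat_apply_zero_one (A B : E) : qmat p E conj A B 0 1 = B := rfl

lemma one_eq_qmat : (1 : Matrix (Fin 2) (Fin 2) E) = qmat p E conj 1 0 := by
  ext i j; fin_cases i <;> fin_cases j <;> simp [qmat]

lemma qmat_add (A B A' B' : E) :
    qmat p E conj A B + qmat p E conj A' B' = qmat p E conj (A + A') (B + B') := by
  ext i j; fin_cases i <;> fin_cases j <;> simp [qmat, mul_add]

lemma smul_qmat {e : E} (he : conj e = e) (A B : E) :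
    e • qmat p E conj A B = qmat p E conj (e * A) (e * B) := by
  ext i j; fin_cases i <;> fin_cases j <;> simp [qmat, he, mul_left_comm]

lemma algebraMap_smul_mem_ODset {z : ℤ_[p]ˣ}
    (hα : α * α = algebraMap ℚ_[p] E ((z : ℤ_[p]) : ℚ_[p])) {q : ℚ_[p]}
    (hq : algebraMap ℚ_[p] E q ∈ OE p E α) {x : Matrix (Fin 2) (Fin 2) E}
    (hx : x ∈ ODset p E α conj) : algebraMap ℚ_[p] E q • x ∈ ODset p E α conj := by
  obtain ⟨a, b, ha, hb, rfl⟩ := hx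
  exact ⟨_, _, (OESubring hα).mul_mem hq ha, (OESubring hα).mul_mem hq hb,
    smul_qmat conj (AlgHom.commutes _ _) a b⟩

variable {conj} (hcc : Function.Involutive conj)
include hcc

lemma qmat_mul (A B A' B' : E) :
    qmat p E conj A B * qmat p E conj A' B'
      = qmat p E conj (A * A' + pE p E * (B * conj B')) (A * B' + B * conj A') := by
  simp only [qmat, mul_fin_two, map_add, map_mul, hcc _, conj_pE, EmbeddingLike.apply_eq_iff_eq,
    vecCons_inj, and_true]
  refine ⟨?_, ?_, ?_⟩ <;> ring

lemma qmat_mul_smul_qmat (k : ℕ) (c d g₁ g₂ : E) :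
    qmat p E conj ((pE p E)⁻¹ ^ k * c) ((pE p E)⁻¹ ^ (k + 1) * d)
        * (pE p E ^ (2 * k + 1) • qmat p E conj g₁ g₂)
      = qmat p E conj (pE p E ^ (k + 1) * (c * g₁ + d * conj g₂))
          (pE p E ^ k * (pE p E * (c * g₂) + d * conj g₁)) := by
  have := pE_ne_zero (p := p) (E := E)
  rw [smul_qmat conj (by rw [map_pow, conj_pE]), qmat_mul hcc]
  simp only [map_mul, map_pow, conj_pE, inv_pow]
  congr 1 <;> field_simp <;> ring

lemma adjugate_qmat (A B : E) :
    (qmat p E conj A B).adjugate = qmat p E conj (conj A) (-B) := by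
  rw [qmat, adjugate_fin_two_of, qmat, hcc A, map_neg, mul_neg]

variable {z : ℤ_[p]ˣ} (hα : α * α = algebraMap ℚ_[p] E ((z : ℤ_[p]) : ℚ_[p]))
  (hconj : conj α = -α)
include hα hconj

lemma mul_mem_ODset {x y : Matrix (Fin 2) (Fin 2) E} (hx : x ∈ ODset p E α conj)
    (hy : y ∈ ODset p E α conj) : x * y ∈ ODset p E α conj := by
  obtain ⟨a, b, ha, hb, rfl⟩ := hx
  obtain ⟨a', b', ha', hb', rfl⟩ := hy
  let O := OESubring hα
  exact ⟨_, _,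
    O.add_mem (O.mul_mem ha ha') (O.mul_mem pE_mem_OE (O.mul_mem hb (conj_mem_OE conj hconj hb'))),
    O.add_mem (O.mul_mem ha hb') (O.mul_mem hb (conj_mem_OE conj hconj ha')),
    qmat_mul hcc a b a' b'⟩

lemma adjugate_mem_ODset {x : Matrix (Fin 2) (Fin 2) E} (hx : x ∈ ODset p E α conj) :
    x.adjugate ∈ ODset p E α conj := by
  obtain ⟨a, b, ha, hb, rfl⟩ := hx
  exact ⟨_, _, conj_mem_OE conj hconj ha, (OESubring hα).neg_mem hb, adjugate_qmat hcc a b⟩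

end Quaternion

lemma det_one_add_eq_trace_of_det_eq_one {R : Type*} [CommRing R] {h : Matrix (Fin 2) (Fin 2) R}
    (hd : h.det = 1) : (1 + h).det = (1 + h).trace := by
  rw [det_fin_two] at hd ⊢
  simp only [Matrix.add_apply, one_apply_eq, one_apply_ne zero_ne_one, one_apply_ne one_ne_zero,
    trace_fin_two]
  linear_combination hd

lemma isUnit_four_add_p_mul (hp : p ≠ 2) (s : ℤ_[p]) : IsUnit (4 + p * s : ℤ_[p]) := by
  have h4 : IsUnit (4 : ℤ_[p]) := PadicInt.isUnit_iff.mpr <| by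
    exact_mod_cast PadicInt.norm_natCast_eq_one_iff.mpr
      (((Nat.coprime_primes Fact.out Nat.prime_two).mpr hp).pow_right 2)
  rw [← IsLocalRing.notMem_maximalIdeal] at h4 ⊢
  intro h
  have hps : (p : ℤ_[p]) * s ∈ IsLocalRing.maximalIdeal ℤ_[p] :=
    Ideal.mul_mem_right _ _ PadicInt.p_nonunit
  exact h4 (by simpa using Ideal.sub_mem _ h hps)

lemma deltaM_pow_two_mul (n : ℕ) :
    deltaM p E ^ (2 * n) = pE p E ^ n • (1 : Matrix (Fin 2) (Fin 2) E) := by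
  have hsq : deltaM p E ^ 2 = pE p E • (1 : Matrix (Fin 2) (Fin 2) E) := by
    ext i j; fin_cases i <;> fin_cases j <;> simp [deltaM, sq]
  rw [pow_mul, hsq, smul_pow, one_pow]

lemma exists_smul_of_vDge_two_mul {conj : E → E} {n : ℕ} {m : Matrix (Fin 2) (Fin 2) E}
    (hm : vDge p E α conj (2 * n) m) : ∃ y ∈ ODset p E α conj, m = pE p E ^ n • y := by
  obtain ⟨y, hy, rfl⟩ := hm
  exact ⟨y, hy, by rw [deltaM_pow_two_mul, smul_mul_assoc, one_mul]⟩

section Cayley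

variable {conj : E →ₐ[ℚ_[p]] E} (hcc : Function.Involutive conj) {z : ℤ_[p]ˣ}
  (hα : α * α = algebraMap ℚ_[p] E ((z : ℤ_[p]) : ℚ_[p])) (hconj : conj α = -α)
include hcc hα hconj

lemma exists_cay_eq_smul (hp : p ≠ 2) {n : ℕ} (hn : n ≠ 0) {h : Matrix (Fin 2) (Fin 2) E}
    (hdet : h.det = 1) {y : Matrix (Fin 2) (Fin 2) E} (hy : y ∈ ODset p E α conj)
    (hhy : h - 1 = pE p E ^ n • y) :
    ∃ y' ∈ ODset p E α conj, cay h = pE p E ^ n • y' := by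
  obtain ⟨a, b, ha, hb, rfl⟩ := hy
  obtain ⟨s, hs⟩ := integralF_trEl conj hconj ha
  set P := pE p E ^ n
  have hP : conj P = P := by rw [map_pow, conj_pE]
  have hPp : P = algebraMap ℚ_[p] E ((p * p ^ (n - 1) : ℤ_[p]) : ℚ_[p]) := by
    rw [← pow_succ', Nat.sub_add_cancel (Nat.pos_of_ne_zero hn)]; simp [P, pE]
  have h1h : 1 + h = qmat p E conj (2 + P * a) (P * b) := by
    rw [← sub_add_cancel h 1, hhy, smul_qmat conj hP, one_eq_qmat conj, qmat_add, qmat_add]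
    congr 1 <;> ring
  set t : ℤ_[p] := 4 + p * (p ^ (n - 1) * s)
  have hdet1 : (1 + h).det = algebraMap ℚ_[p] E t := by
    rw [det_one_add_eq_trace_of_det_eq_one hdet, h1h, trace_fin_two]
    calc _ = 4 + P * trEl E conj a := by
          simp only [qmat, trEl, of_apply, cons_val', cons_val_zero, cons_val_one,
            cons_val_fin_one, map_add, map_mul, map_ofNat, hP]
          ring
      _ = _ := by
        simp [t, hs, hPp, mul_assoc, map_ofNat,
          show ((4 : ℤ_[p]) : ℚ_[p]) = 4 from PadicInt.coe_natCast 4]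
  have hinv : (1 + h)⁻¹ = algebraMap ℚ_[p] E (t : ℚ_[p])⁻¹ • (1 + h).adjugate := by
    rw [inv_def, hdet1, Ring.inverse_eq_inv', map_inv₀]
  have hmem1h : 1 + h ∈ ODset p E α conj := ⟨_, _,
    (OESubring hα).add_mem (ofNat_mem _ 2) ((OESubring hα).mul_mem (pow_mem pE_mem_OE n) ha),
    (OESubring hα).mul_mem (pow_mem pE_mem_OE n) hb, h1h⟩
  refine ⟨algebraMap ℚ_[p] E (-(t : ℚ_[p])⁻¹) • (qmat p E conj a b * (1 + h).adjugate),
    algebraMap_smul_mem_ODset conj hα ?_ (mul_mem_ODset hcc hα hconj ⟨a, b, ha, hb, rfl⟩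
      (adjugate_mem_ODset hcc hα hconj hmem1h)), ?_⟩
  · rw [map_neg]
    exact (OESubring hα).neg_mem (algebraMap_inv_mem_OE (isUnit_four_add_p_mul hp _))
  · rw [cay, ← neg_sub, hhy, hinv, neg_mul, smul_mul_smul_comm, map_neg, neg_smul, smul_neg,
      smul_smul]

end Cayley

end

-- The `W`-coordinates of `w·c(h) ∈ D` are the first row of its matrix.
theorem stmt15_general (p : ℕ) [Fact p.Prime] (hp : p ≠ 2)
    (z : ℤ_[p]ˣ)
    (E : Type) [Field E] [Algebra ℚ_[p] E] (α : E)
    (hα : α * α = algebraMap ℚ_[p] E ((z : ℤ_[p]) : ℚ_[p]))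
    (hspan : ∀ x : E, ∃ a b : ℚ_[p], x = algebraMap ℚ_[p] E a + algebraMap ℚ_[p] E b * α)
    (conj : E →ₐ[ℚ_[p]] E) (hconj : conj α = -α)
    (TrF : E → ℚ_[p]) (hTrF : ∀ t : ℚ_[p], TrF (algebraMap ℚ_[p] E t) = t)
    (ψ : AddChar ℚ_[p] ℂˣ)
    (hψ1 : ∀ t : ℤ_[p], ψ ((p : ℚ_[p]) * (t : ℚ_[p])) = 1)
    (k : ℕ) (h : Matrix (Fin 2) (Fin 2) E)
    (hhD : h ∈ D1set p E conj) (hhv : vDge p E α conj (4 * k + 2) (h - 1))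
    (v : Fin 2 → E) (hv : ∀ i, v i ∈ OE p E α)
    (c d : E) (hc : c ∈ OE p E α) (hd : d ∈ OE p E α) :
    ψ ((p : ℚ_[p]) * TrF (trEl E conj
        (sesqV E conj v v
          * conj (((pE p E)⁻¹ ^ k * c)
              * conj ((qmat p E conj ((pE p E)⁻¹ ^ k * c) ((pE p E)⁻¹ ^ (k + 1) * d)
                  * cay h) 0 0)
            - pE p E * (((pE p E)⁻¹ ^ (k + 1) * d)
              * conj ((qmat p E conj ((pE p E)⁻¹ ^ k * c) ((pE p E)⁻¹ ^ (k + 1) * d)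
                  * cay h) 0 1)))))) = 1 ∧
    tens E conj v
        ![(qmat p E conj ((pE p E)⁻¹ ^ k * c) ((pE p E)⁻¹ ^ (k + 1) * d) * cay h) 0 0,
          (qmat p E conj ((pE p E)⁻¹ ^ k * c) ((pE p E)⁻¹ ^ (k + 1) * d) * cay h) 0 1]
      ∈ Alat p E α conj := by
  have hcc := conj_involutive conj hconj hspan
  obtain ⟨y, hy, hhy⟩ := exists_smul_of_vDge_two_mul (n := 2 * k + 1) (m := h - 1)
    (by rwa [show 2 * (2 * k + 1) = 4 * k + 2 by ring])
  obtain ⟨_, ⟨g₁, g₂, hg₁, hg₂, rfl⟩, hcay⟩ :=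
    exists_cay_eq_smul hcc hα hconj hp (by omega) hhD.2 hy hhy
  set O := OESubring hα
  set e₁ := c * g₁ + d * conj g₂
  set e₂ := pE p E * (c * g₂) + d * conj g₁
  have he₁ : e₁ ∈ O := O.add_mem (O.mul_mem hc hg₁) (O.mul_mem hd (conj_mem_OE conj hconj hg₂))
  have he₂ : e₂ ∈ O := O.add_mem (O.mul_mem pE_mem_OE (O.mul_mem hc hg₂))
    (O.mul_mem hd (conj_mem_OE conj hconj hg₁))
  rw [hcay, qmat_mul_smul_qmat hcc]
  simp only [qmat_apply_zero_zero, qmat_apply_zero_one]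
  refine ⟨?_, AddSubgroup.subset_closure ⟨v, _, hv, Fin.forall_fin_two.mpr
    ⟨O.mul_mem (O.pow_mem pE_mem_OE _) he₁, O.mul_mem (O.pow_mem pE_mem_OE _) he₂⟩, rfl⟩⟩
  rw [pE_pow_pairing]
  exact psi_trEl_eq_one conj hconj hTrF hψ1 (O.mul_mem (sesqV_mem_OE conj hconj hα hv hv)
    (conj_mem_OE conj hconj (O.sub_mem (O.mul_mem pE_mem_OE (O.mul_mem hc
      (conj_mem_OE conj hconj he₁))) (O.mul_mem hd (conj_mem_OE conj hconj he₂)))))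

/-- for `k ≥ 0` and `h ∈ D¹` with `v_D(h - 1) ≥ 4k + 2` (acting on `W = D` by
right multiplication), for every `v ∈ Γ = O_E²` and every `w = p^{-k}c + p^{-k-1}d·δ` with
`c, d ∈ O_E` (i.e. `w ∈ p^{-k}(O_E + P_E⁻¹δ)`):
(i) `χ(Tr_{E/F}(⟨v,v⟩·conj(⟨w, w·c(h)⟩'))) = 1` where `χ(t) = ψ(p·t)` and `c(h)` is the
Cayley transform in `D`; and (ii) `v ⊗ (w·c(h)) ∈ A`.  The `W = D`-coordinates of
`w·c(h) ∈ D` are the entries of its first matrix row. -/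
theorem stmt15 (p : ℕ) [Fact p.Prime] (hp : p ≠ 2)
    (z : ℤ_[p]ˣ) (hz : ¬ ∃ w : ℤ_[p], w * w = (z : ℤ_[p]))
    (E : Type) [Field E] [Algebra ℚ_[p] E] (α : E)
    (hα : α * α = algebraMap ℚ_[p] E ((z : ℤ_[p]) : ℚ_[p]))
    (hα0 : α ∉ Set.range (algebraMap ℚ_[p] E))
    (hspan : ∀ x : E, ∃ a b : ℚ_[p], x = algebraMap ℚ_[p] E a + algebraMap ℚ_[p] E b * α)
    (conj : E →ₐ[ℚ_[p]] E) (hconj : conj α = -α)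
    (TrF : E → ℚ_[p]) (hTrF : ∀ t : ℚ_[p], TrF (algebraMap ℚ_[p] E t) = t)
    (ψ : AddChar ℚ_[p] ℂˣ)
    (hψ1 : ∀ t : ℤ_[p], ψ ((p : ℚ_[p]) * (t : ℚ_[p])) = 1)
    (hψ2 : ∃ t : ℤ_[p], ψ ((t : ℚ_[p])) ≠ 1)
    (k : ℕ) (h : Matrix (Fin 2) (Fin 2) E)
    (hhD : h ∈ D1set p E conj) (hhv : vDge p E α conj (4 * k + 2) (h - 1))
    (v : Fin 2 → E) (hv : ∀ i, v i ∈ OE p E α)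
    (c d : E) (hc : c ∈ OE p E α) (hd : d ∈ OE p E α) :
    ψ ((p : ℚ_[p]) * TrF (trEl E conj
        (sesqV E conj v v
          * conj (((pE p E)⁻¹ ^ k * c)
              * conj ((qmat p E conj ((pE p E)⁻¹ ^ k * c) ((pE p E)⁻¹ ^ (k + 1) * d)
                  * cay h) 0 0)
            - pE p E * (((pE p E)⁻¹ ^ (k + 1) * d)
              * conj ((qmat p E conj ((pE p E)⁻¹ ^ k * c) ((pE p E)⁻¹ ^ (k + 1) * d)
                  * cay h) 0 1)))))) = 1 ∧
    tens E conj v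
        ![(qmat p E conj ((pE p E)⁻¹ ^ k * c) ((pE p E)⁻¹ ^ (k + 1) * d) * cay h) 0 0,
          (qmat p E conj ((pE p E)⁻¹ ^ k * c) ((pE p E)⁻¹ ^ (k + 1) * d) * cay h) 0 1]
      ∈ Alat p E α conj :=
  stmt15_general p hp z E α hα hspan conj hconj TrF hTrF ψ hψ1 k h hhD hhv v hv c d hc hd
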